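/- Let X and P be operators on a finite-dimensional complex inner product space H with P self-adjoint. Then the range of P is contained in the range of X† (equivalently, in the support of X† ∘ X) if and only if there exists a self-adjoint operator Q on H such that P = X† ∘ Q ∘ X. -/

import Mathlib

open ContinuousLinearMap

/-!
Any linear map `T` has a generalized inverse `R`, i.e. `T R T = T`. For `T = X†`, the inclusion
`range P ≤ range X†` gives `P = X† R P`, whose adjoint is `P = P R† X`. Substituting the second
identity into the first yields `P = X† (R P R†) X`, and `R P R†` is self-adjoint with `P`.
-/

namespace LinearMap

variable {K U V W : Type*} [DivisionRing K] [AddCommGroup U] [Module K U]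
  [AddCommGroup V] [Module K V] [AddCommGroup W] [Module K W]

theorem exists_comp_comp_eq_self (T : V →ₗ[K] W) : ∃ R : W →ₗ[K] V, T ∘ₗ R ∘ₗ T = T := by
  obtain ⟨g, hg⟩ := T.rangeRestrict.exists_rightInverse_of_surjective T.range_rangeRestrict
  obtain ⟨R, hR⟩ := exists_extend g
  refine ⟨R, ext fun x => ?_⟩
  have hRT : R (T x) = g (T.rangeRestrict x) := congr($hR (T.rangeRestrict x))
  have hTg : T (g (T.rangeRestrict x)) = T x := congr(($hg (T.rangeRestrict x) : W))
  simpa [hRT] using hTg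

theorem exists_comp_comp_eq_of_range_le (T : V →ₗ[K] W) {P : U →ₗ[K] W}
    (h : range P ≤ range T) : ∃ R : W →ₗ[K] V, T ∘ₗ R ∘ₗ P = P := by
  obtain ⟨R, hR⟩ := T.exists_comp_comp_eq_self
  refine ⟨R, ext fun x => ?_⟩
  obtain ⟨y, hy⟩ := h (mem_range_self P x)
  simpa [← hy] using congr($hR y)

end LinearMap

theorem ContinuousLinearMap.exists_comp_comp_eq_of_range_le {𝕜 U V W : Type*}
    [NontriviallyNormedField 𝕜] [CompleteSpace 𝕜]
    [AddCommGroup U] [Module 𝕜 U] [TopologicalSpace U]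
    [AddCommGroup V] [Module 𝕜 V] [TopologicalSpace V] [IsTopologicalAddGroup V]
    [ContinuousSMul 𝕜 V]
    [AddCommGroup W] [Module 𝕜 W] [TopologicalSpace W] [IsTopologicalAddGroup W]
    [ContinuousSMul 𝕜 W] [T2Space W] [FiniteDimensional 𝕜 W]
    (T : V →L[𝕜] W) {P : U →L[𝕜] W}
    (h : LinearMap.range (P : U →ₗ[𝕜] W) ≤ LinearMap.range (T : V →ₗ[𝕜] W)) :
    ∃ R : W →L[𝕜] V, T ∘L R ∘L P = P := by
  obtain ⟨R, hR⟩ := (T : V →ₗ[𝕜] W).exists_comp_comp_eq_of_range_le h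
  exact ⟨⟨R, R.continuous_of_finiteDimensional⟩, coe_injective hR⟩

theorem range_le_range_adjoint_iff_exists_sandwich
    {H : Type*} [NormedAddCommGroup H] [InnerProductSpace ℂ H] [FiniteDimensional ℂ H]
    (X P : H →L[ℂ] H) (hP : IsSelfAdjoint P) :
    LinearMap.range (P : H →ₗ[ℂ] H) ≤ LinearMap.range (ContinuousLinearMap.adjoint X : H →ₗ[ℂ] H) ↔
      ∃ Q : H →L[ℂ] H, IsSelfAdjoint Q ∧
        P = ContinuousLinearMap.adjoint X ∘L Q ∘L X := by
  constructor
  · intro h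
    obtain ⟨R, hR⟩ := (adjoint X).exists_comp_comp_eq_of_range_le h
    have hR' : P ∘L adjoint R ∘L X = P := by
      simpa [adjoint_comp, hP.adjoint_eq, comp_assoc] using congrArg adjoint hR
    refine ⟨R ∘L P ∘L adjoint R, hP.conjugate R, ?_⟩
    calc P = adjoint X ∘L R ∘L P := hR.symm
      _ = adjoint X ∘L R ∘L (P ∘L adjoint R ∘L X) := by rw [hR']
      _ = adjoint X ∘L (R ∘L P ∘L adjoint R) ∘L X := by simp only [comp_assoc]
  · rintro ⟨Q, -, rfl⟩
    rintro - ⟨x, rfl⟩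
    exact ⟨Q (X x), rfl⟩
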